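/- arXiv:1411.6497 — 2 statements merged into one kernel-verified Lean document; each statement's English description precedes it below -/
import Mathlib

section
/- Let L be an algebraic lattice and let φ₁, φ₂ be algebraic (finitary) closure operators on L. Then both the meet of φ₁ and φ₂ in the lattice of closure operators on L (which is the pointwise meet x ↦ φ₁(x) ⊓ φ₂(x)) and the join of φ₁ and φ₂ in the lattice of closure operators on L (the least closure operator above both in the pointwise order) are algebraic closure operators. Hence the algebraic closure operators form a sublattice of the lattice of all closure operators on L. -/
/-- A closure operator on a complete lattice: extensive, idempotent and isotone. -/
def IsClosureOp {L : Type*} [CompleteLattice L] (φ : L → L) : Prop :=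
  (∀ x, x ≤ φ x) ∧ (∀ x, φ (φ x) = φ x) ∧ (∀ x y : L, x ≤ y → φ x ≤ φ y)

/-- A map on a complete lattice is finitary if its value at `x` is the sup of its
values at the compact elements below `x`. -/
def Finitary {L : Type*} [CompleteLattice L] (φ : L → L) : Prop :=
  ∀ x : L, φ x = ⨆ k ∈ {k : L | IsCompactElement k ∧ k ≤ x}, φ k

/-!
On an algebraic lattice a map is finitary exactly when it preserves directed suprema.
For the meet, a compact element below `φ₁ x ⊓ φ₂ x` lies below `φ₁ k₁` and `φ₂ k₂` for compact
`k₁, k₂ ≤ x`, hence below both values at the compact element `k₁ ⊔ k₂`. The join of `φ₁` and `φ₂`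
is `x ↦ ⨆ n, (φ₂ ∘ φ₁)^[n] x`: since `φ₂ ∘ φ₁` preserves directed suprema, so do its iterates,
which makes this supremum idempotent and finitary, and every closure operator above `φ₁` and `φ₂`
dominates each iterate.
-/

open CompleteLattice

namespace CompleteLattice

variable {L : Type*} [CompleteLattice L]

theorem isCompactElement_bot : IsCompactElement (⊥ : L) := by
  simpa using isCompactElement_finsetSup (f := id) (∅ : Finset L) (by simp)

theorem IsCompactElement.sup {a b : L} (ha : IsCompactElement a) (hb : IsCompactElement b) :
    IsCompactElement (a ⊔ b) := by
  classical
  simpa using isCompactElement_finsetSup (f := id) {a, b} (by simp [ha, hb])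

theorem directedOn_compact_le (x : L) :
    DirectedOn (· ≤ ·) {k : L | IsCompactElement k ∧ k ≤ x} := by
  rintro a ⟨ha, hax⟩ b ⟨hb, hbx⟩
  exact ⟨a ⊔ b, ⟨ha.sup hb, sup_le hax hbx⟩, le_sup_left, le_sup_right⟩

theorem nonempty_compact_le (x : L) : {k : L | IsCompactElement k ∧ k ≤ x}.Nonempty :=
  ⟨⊥, isCompactElement_bot, bot_le⟩

end CompleteLattice

theorem ScottContinuous.iterate {α : Type*} [Preorder α] {g : α → α} (hg : ScottContinuous g) :
    ∀ n : ℕ, ScottContinuous g^[n]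
  | 0 => ScottContinuous.id
  | n + 1 => by
    rw [Function.iterate_succ']
    exact (hg.iterate n).comp hg

theorem ScottContinuous.iSup {α β ι : Type*} [CompleteLattice α] [CompleteLattice β]
    {f : ι → α → β} (hf : ∀ i, ScottContinuous (f i)) : ScottContinuous fun x => ⨆ i, f i x :=
  .of_map_sSup fun d hne hdir => by
    have hmap (i : ι) : f i (sSup d) = ⨆ e ∈ d, f i e := by
      rw [(hf i).map_sSup hne hdir, sSup_image]
    rw [sSup_image]
    simp only [hmap]
    rw [iSup_comm]
    exact iSup_congr fun e => iSup_comm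

section

variable {L : Type*} [CompleteLattice L]

namespace IsClosureOp

variable {φ₁ φ₂ ψ : L → L}

theorem le_apply (hψ : IsClosureOp ψ) (x : L) : x ≤ ψ x := hψ.1 x

theorem apply_apply (hψ : IsClosureOp ψ) (x : L) : ψ (ψ x) = ψ x := hψ.2.1 x

theorem monotone (hψ : IsClosureOp ψ) : Monotone ψ := fun x y => hψ.2.2 x y

theorem inf (h₁ : IsClosureOp φ₁) (h₂ : IsClosureOp φ₂) : IsClosureOp fun x => φ₁ x ⊓ φ₂ x := by
  refine ⟨fun x => le_inf (h₁.le_apply x) (h₂.le_apply x), fun x => ?_,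
    fun x y hxy => inf_le_inf (h₁.monotone hxy) (h₂.monotone hxy)⟩
  refine le_antisymm (le_inf ?_ ?_) (le_inf (h₁.le_apply _) (h₂.le_apply _))
  · exact inf_le_left.trans ((h₁.monotone inf_le_left).trans_eq (h₁.apply_apply x))
  · exact inf_le_right.trans ((h₂.monotone inf_le_right).trans_eq (h₂.apply_apply x))

theorem comp_le (hψ : IsClosureOp ψ) (h₁ : ∀ x, φ₁ x ≤ ψ x) (h₂ : ∀ x, φ₂ x ≤ ψ x) (x : L) :
    φ₂ (φ₁ x) ≤ ψ x :=
  (h₂ _).trans ((hψ.monotone (h₁ x)).trans_eq (hψ.apply_apply x))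

end IsClosureOp

namespace Finitary

variable {φ φ₁ φ₂ : L → L}

theorem monotone (hφ : Finitary φ) : Monotone φ := by
  intro x y hxy
  rw [hφ x, hφ y]
  exact biSup_mono fun k hk => ⟨hk.1, hk.2.trans hxy⟩

theorem exists_compact_le (hφ : Finitary φ) {c x : L} (hc : IsCompactElement c)
    (hcx : c ≤ φ x) : ∃ k, IsCompactElement k ∧ k ≤ x ∧ c ≤ φ k := by
  rw [hφ x, ← sSup_image] at hcx
  obtain ⟨_, ⟨k, hk, rfl⟩, hck⟩ := (isCompactElement_iff_le_of_directed_sSup_le L c).mp hc _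
    ((nonempty_compact_le x).image φ) ((directedOn_compact_le x).mono_comp hφ.monotone) hcx
  exact ⟨k, hk.1, hk.2, hck⟩

theorem scottContinuous (hφ : Finitary φ) : ScottContinuous φ := by
  refine .of_map_sSup fun d hne hdir => le_antisymm ?_ (sSup_le ?_)
  · rw [hφ]
    refine iSup₂_le fun k hk => ?_
    obtain ⟨e, he, hke⟩ :=
      (isCompactElement_iff_le_of_directed_sSup_le L k).mp hk.1 d hne hdir hk.2
    exact (hφ.monotone hke).trans (le_sSup (Set.mem_image_of_mem φ he))
  · rintro _ ⟨e, he, rfl⟩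
    exact hφ.monotone (le_sSup he)

theorem inf [IsCompactlyGenerated L] (h₁ : Finitary φ₁) (h₂ : Finitary φ₂) :
    Finitary fun x => φ₁ x ⊓ φ₂ x := by
  intro x
  refine le_antisymm (le_iff_compact_le_imp.mpr fun c hc hcx => ?_)
    (iSup₂_le fun k hk => inf_le_inf (h₁.monotone hk.2) (h₂.monotone hk.2))
  obtain ⟨k₁, hk₁, hk₁x, hck₁⟩ := h₁.exists_compact_le hc (hcx.trans inf_le_left)
  obtain ⟨k₂, hk₂, hk₂x, hck₂⟩ := h₂.exists_compact_le hc (hcx.trans inf_le_right)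
  refine le_trans ?_ (le_iSup₂_of_le (k₁ ⊔ k₂) ⟨hk₁.sup hk₂, sup_le hk₁x hk₂x⟩ le_rfl)
  exact le_inf (hck₁.trans (h₁.monotone le_sup_left)) (hck₂.trans (h₂.monotone le_sup_right))

end Finitary

theorem ScottContinuous.finitary [IsCompactlyGenerated L] {φ : L → L} (hφ : ScottContinuous φ) :
    Finitary φ := fun x => by
  conv_lhs => rw [← sSup_compact_le_eq x]
  rw [hφ.map_sSup (nonempty_compact_le x) (directedOn_compact_le x), sSup_image]

def iterSup (g : L → L) (x : L) : L := ⨆ n : ℕ, g^[n] x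

variable {g : L → L}

theorem iterate_le_iterSup (x : L) (n : ℕ) : g^[n] x ≤ iterSup g x :=
  le_iSup (fun n => g^[n] x) n

theorem le_iterSup (x : L) : g x ≤ iterSup g x := iterate_le_iterSup x 1

theorem ScottContinuous.iterSup (hg : ScottContinuous g) : ScottContinuous (iterSup g) :=
  ScottContinuous.iSup hg.iterate

theorem iterSup_le {ψ : L → L} (hψ : IsClosureOp ψ) (hg : ∀ x, g x ≤ ψ x) (x : L) :
    iterSup g x ≤ ψ x := by
  refine iSup_le fun n => ?_
  induction n with
  | zero => exact hψ.le_apply x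
  | succ n ih =>
    rw [Function.iterate_succ_apply']
    exact (hg _).trans ((hψ.monotone ih).trans_eq (hψ.apply_apply x))

theorem isClosureOp_iterSup (hg : ScottContinuous g) (hext : id ≤ g) :
    IsClosureOp (iterSup g) := by
  refine ⟨(iterate_le_iterSup · 0), fun x => le_antisymm (iSup_le fun n => ?_)
    (iterate_le_iterSup _ 0), fun x y hxy => iSup_mono fun n => hg.monotone.iterate n hxy⟩
  have hchain : Monotone fun m => g^[m] x := fun m m' h => Function.monotone_iterate_of_id_le hext h x
  rw [iterSup, ← sSup_range, (hg.iterate n).map_sSup (Set.range_nonempty _)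
    hchain.directed_le.directedOn_range, ← Set.range_comp, sSup_range]
  refine iSup_le fun m => ?_
  rw [Function.comp_apply, ← Function.iterate_add_apply]
  exact iterate_le_iterSup x (n + m)

end

/-- For algebraic closure operators `φ₁, φ₂` on an algebraic lattice, their meet
in the lattice of closure operators (the pointwise meet) is an algebraic closure
operator, and their join in the lattice of closure operators (the least closure
operator above both in the pointwise order) is an algebraic closure operator.
Hence the algebraic closure operators form a sublattice of the lattice of all
closure operators. -/
theorem aco_sublattice {L : Type*} [CompleteLattice L] [IsCompactlyGenerated L]
    (φ₁ φ₂ : L → L) (h₁ : IsClosureOp φ₁) (h₂ : IsClosureOp φ₂)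
    (f₁ : Finitary φ₁) (f₂ : Finitary φ₂) :
    (IsClosureOp (fun x => φ₁ x ⊓ φ₂ x) ∧ Finitary (fun x => φ₁ x ⊓ φ₂ x)) ∧
    (∀ ψ : L → L, IsClosureOp ψ →
      (∀ x, φ₁ x ≤ ψ x) → (∀ x, φ₂ x ≤ ψ x) →
      (∀ ρ : L → L, IsClosureOp ρ → (∀ x, φ₁ x ≤ ρ x) → (∀ x, φ₂ x ≤ ρ x) →
        ∀ x, ψ x ≤ ρ x) →
      Finitary ψ) := by
  refine ⟨⟨h₁.inf h₂, f₁.inf f₂⟩, fun ψ hψ hψ₁ hψ₂ hleast => ?_⟩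
  have hg : ScottContinuous (φ₂ ∘ φ₁) := f₁.scottContinuous.comp f₂.scottContinuous
  have hρ : IsClosureOp (iterSup (φ₂ ∘ φ₁)) :=
    isClosureOp_iterSup hg fun x => (h₁.le_apply x).trans (h₂.le_apply _)
  have hψρ : ψ = iterSup (φ₂ ∘ φ₁) := funext <| fun x => le_antisymm
    (hleast _ hρ (fun x => (h₂.le_apply _).trans (le_iterSup (g := φ₂ ∘ φ₁) x))
      (fun x => (h₂.monotone (h₁.le_apply x)).trans (le_iterSup (g := φ₂ ∘ φ₁) x)) x)
    (iterSup_le hψ (hψ.comp_le hψ₁ hψ₂) x)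
  exact hψρ ▸ hg.iterSup.finitary
end

section
/- Let L be an algebraic lattice, let a, b, v ∈ L with a compact, and define φ^v_{a,b} : L → L by φ^v_{a,b}(x) = x ⊔ v ⊔ b if a ≤ x ⊔ v, and φ^v_{a,b}(x) = x ⊔ v otherwise. Then φ^v_{a,b} is finitary, i.e. φ^v_{a,b}(x) = ⨆ {φ^v_{a,b}(k) : k compact, k ≤ x} for all x ∈ L; hence it is an algebraic closure operator. -/
open scoped Classical in
/-- The operator `φ^v_{a,b}` sending `x` to `x ⊔ v ⊔ b` when `a ≤ x ⊔ v`, and to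
`x ⊔ v` otherwise. -/
noncomputable def phiV {L : Type*} [CompleteLattice L] (v a b : L) (x : L) : L :=
  if a ≤ x ⊔ v then x ⊔ v ⊔ b else x ⊔ v

/-!
Since `x ⊔ v` is the join of `v` and the compact elements below `x`, compactness of `a` turns
`a ≤ x ⊔ v` into `a ≤ k ⊔ v` for a single compact `k ≤ x` (a finite join of them), and then
`b ≤ φ k`. The other joinands `x` and `v` of `φ x` are reached through the compact elements
below `x` and through `φ ⊥`.
-/

open CompleteLattice

theorem CompleteLattice.isCompactElement_bot_s14 {L : Type*} [CompleteLattice L] :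
    IsCompactElement (⊥ : L) := by
  simpa using isCompactElement_finsetSup (f := id) (∅ : Finset L) (by simp)

theorem CompleteLattice.IsCompactElement.exists_le_sup_of_le_sup {L : Type*} [CompleteLattice L]
    [IsCompactlyGenerated L] {c : L} (hc : IsCompactElement c) {x v : L} (h : c ≤ x ⊔ v) :
    ∃ k, IsCompactElement k ∧ k ≤ x ∧ c ≤ k ⊔ v := by
  classical
  set T := {k : L | IsCompactElement k ∧ k ≤ x}
  have hcT : c ≤ sSup (insert v T) := by rwa [sSup_insert, sSup_compact_le_eq, sup_comm]
  obtain ⟨F, hFT, hcF⟩ := (isCompactElement_iff_exists_le_sSup_of_le_sSup (k := c)).mp hc _ hcT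
  have hT : ∀ k ∈ F.erase v, k ∈ T := fun k hk =>
    (hFT (Finset.mem_of_mem_erase hk)).resolve_left (Finset.ne_of_mem_erase hk)
  refine ⟨(F.erase v).sup id, isCompactElement_finsetSup _ fun k hk => (hT k hk).1,
    Finset.sup_le fun k hk => (hT k hk).2, hcF.trans ?_⟩
  calc F.sup id ≤ (insert v (F.erase v)).sup id :=
        Finset.sup_mono (Finset.insert_erase_subset v F)
    _ = (F.erase v).sup id ⊔ v := by rw [Finset.sup_insert, id, sup_comm]

theorem finitary_iff_le_iSup {L : Type*} [CompleteLattice L] {φ : L → L} (hφ : Monotone φ) :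
    Finitary φ ↔ ∀ x, φ x ≤ ⨆ k ∈ {k : L | IsCompactElement k ∧ k ≤ x}, φ k :=
  forall_congr' fun _ => ⟨le_of_eq, fun h => le_antisymm h (iSup₂_le fun _ hk => hφ hk.2)⟩

section phiV

variable {L : Type*} [CompleteLattice L] (v a b : L) {x : L}

theorem phiV_of_le (h : a ≤ x ⊔ v) : phiV v a b x = x ⊔ v ⊔ b := if_pos h

theorem phiV_of_not_le (h : ¬a ≤ x ⊔ v) : phiV v a b x = x ⊔ v := if_neg h

theorem sup_le_phiV (x : L) : x ⊔ v ≤ phiV v a b x := by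
  unfold phiV
  split_ifs
  exacts [le_sup_left, le_rfl]

theorem monotone_phiV : Monotone (phiV v a b) := by
  intro x y hxy
  have hxy' : x ⊔ v ≤ y ⊔ v := sup_le_sup_right hxy v
  by_cases hx : a ≤ x ⊔ v
  · rw [phiV_of_le v a b hx, phiV_of_le v a b (hx.trans hxy')]
    exact sup_le_sup_right hxy' b
  · rw [phiV_of_not_le v a b hx]
    exact hxy'.trans (sup_le_phiV v a b y)

theorem phiV_phiV (x : L) : phiV v a b (phiV v a b x) = phiV v a b x := by
  by_cases hx : a ≤ x ⊔ v
  · rw [phiV_of_le v a b hx, phiV_of_le v a b (hx.trans (le_sup_left.trans le_sup_left))]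
    simp [sup_assoc]
  · rw [phiV_of_not_le v a b hx, phiV_of_not_le v a b (by rwa [sup_assoc, sup_idem])]
    simp

theorem isClosureOp_phiV : IsClosureOp (phiV v a b) :=
  ⟨fun x => le_sup_left.trans (sup_le_phiV v a b x), phiV_phiV v a b,
    fun _ _ h => monotone_phiV v a b h⟩

end phiV

theorem phiV_le_iSup_compact {L : Type*} [CompleteLattice L] [IsCompactlyGenerated L] (v b : L)
    {a : L} (ha : IsCompactElement a) (x : L) :
    phiV v a b x ≤ ⨆ k ∈ {k : L | IsCompactElement k ∧ k ≤ x}, phiV v a b k := by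
  set S := ⨆ k ∈ {k : L | IsCompactElement k ∧ k ≤ x}, phiV v a b k
  have hS : ∀ k, IsCompactElement k → k ≤ x → phiV v a b k ≤ S := fun k hk hkx =>
    le_iSup₂ (f := fun k _ => phiV v a b k) k ⟨hk, hkx⟩
  have hxS : x ≤ S := le_iff_compact_le_imp.mpr fun k hk hkx =>
    (le_sup_left.trans (sup_le_phiV v a b k)).trans (hS k hk hkx)
  have hvS : v ≤ S :=
    (le_sup_right.trans (sup_le_phiV v a b ⊥)).trans (hS ⊥ isCompactElement_bot_s14 bot_le)
  by_cases hax : a ≤ x ⊔ v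
  · obtain ⟨k, hk, hkx, hak⟩ := ha.exists_le_sup_of_le_sup hax
    have hbS : b ≤ S := le_sup_right.trans ((phiV_of_le v a b hak).symm.trans_le (hS k hk hkx))
    rw [phiV_of_le v a b hax]
    exact sup_le (sup_le hxS hvS) hbS
  · rw [phiV_of_not_le v a b hax]
    exact sup_le hxS hvS

/-- If `a` is compact in an algebraic lattice then `φ^v_{a,b}` is finitary, hence
an algebraic closure operator. -/
theorem phiV_finitary {L : Type*} [CompleteLattice L] [IsCompactlyGenerated L]
    (a b v : L) (ha : IsCompactElement a) :
    Finitary (phiV v a b) ∧ IsClosureOp (phiV v a b) :=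
  ⟨(finitary_iff_le_iSup (monotone_phiV v a b)).mpr (phiV_le_iSup_compact v b ha),
    isClosureOp_phiV v a b⟩
end
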